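/- Let n ≥ 1 and let M be a Hausdorff topological space with closed subsets P and Q such that M = P ∪ Q. Suppose there are homeomorphisms h₁ : P → ℝⁿ⁻¹ × [0,∞) and h₂ : Q → ℝⁿ⁻¹ × [0,∞) such that h₁(P ∩ Q) = ℝⁿ⁻¹ × {0} and h₂(P ∩ Q) = ℝⁿ⁻¹ × {0}. Then M is homeomorphic to ℝⁿ. -/

import Mathlib

/-!
Both `h₁` and `h₂` parametrise the common boundary `P ∩ Q` by `ℝⁿ⁻¹`, so the two parametrisations
differ by a homeomorphism `φ` of `ℝⁿ⁻¹`. Sending `P` onto the lower half-space `ℝⁿ⁻¹ × (-∞, 0]` by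
`h₁` and `Q` onto the upper half-space `ℝⁿ⁻¹ × [0, ∞)` by `(φ × id) ∘ h₂` gives two maps that agree
on `P ∩ Q`; by the pasting lemma for the closed covers `{P, Q}` and `{lower, upper}` they glue to a
homeomorphism `M ≃ₜ ℝⁿ⁻¹ × ℝ ≃ₜ ℝⁿ`.
-/

open Set Topology

section Glue

variable {X Y : Type*} {P Q : Set X}

open Classical in
noncomputable def glueMap (hPQ : P ∪ Q = univ) (f : P → Y) (g : Q → Y) (x : X) : Y :=
  if hx : x ∈ P then f ⟨x, hx⟩
  else g ⟨x, ((hPQ ▸ mem_univ x : x ∈ P ∪ Q)).resolve_left hx⟩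

variable {hPQ : P ∪ Q = univ} {f : P → Y} {g : Q → Y}

theorem glueMap_of_mem_left {x : X} (hx : x ∈ P) : glueMap hPQ f g x = f ⟨x, hx⟩ :=
  dif_pos hx

theorem glueMap_of_mem_right (hfg : ∀ x (hxP : x ∈ P) (hxQ : x ∈ Q), f ⟨x, hxP⟩ = g ⟨x, hxQ⟩)
    {x : X} (hx : x ∈ Q) : glueMap hPQ f g x = g ⟨x, hx⟩ := by
  by_cases hxP : x ∈ P
  · rw [glueMap_of_mem_left hxP, hfg x hxP hx]
  · exact dif_neg hxP

variable [TopologicalSpace X] [TopologicalSpace Y]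

theorem continuous_glueMap (hP : IsClosed P) (hQ : IsClosed Q)
    (hfg : ∀ x (hxP : x ∈ P) (hxQ : x ∈ Q), f ⟨x, hxP⟩ = g ⟨x, hxQ⟩)
    (hf : Continuous f) (hg : Continuous g) : Continuous (glueMap hPQ f g) := by
  have hfP : ContinuousOn (glueMap hPQ f g) P := by
    rw [continuousOn_iff_continuous_domRestrict]
    convert hf using 1
    exact funext fun x => glueMap_of_mem_left x.2
  have hgQ : ContinuousOn (glueMap hPQ f g) Q := by
    rw [continuousOn_iff_continuous_domRestrict]
    convert hg using 1
    exact funext fun x => glueMap_of_mem_right hfg x.2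
  rw [← continuousOn_univ, ← hPQ]
  exact hfP.union_of_isClosed hgQ hP hQ

variable {A B : Set Y}

theorem glueMap_leftInverse (hAB : A ∪ B = univ) (f : P ≃ₜ A) (g : Q ≃ₜ B)
    (hfg : ∀ x (hxP : x ∈ P) (hxQ : x ∈ Q), (f ⟨x, hxP⟩ : Y) = g ⟨x, hxQ⟩)
    (hfg_symm : ∀ y (hyA : y ∈ A) (hyB : y ∈ B), (f.symm ⟨y, hyA⟩ : X) = g.symm ⟨y, hyB⟩) :
    Function.LeftInverse (glueMap hAB (fun y => (f.symm y : X)) (fun y => g.symm y))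
      (glueMap hPQ (fun x => (f x : Y)) (fun x => g x)) := by
  intro x
  rcases (hPQ ▸ mem_univ x : x ∈ P ∪ Q) with hx | hx
  · rw [glueMap_of_mem_left hx, glueMap_of_mem_left (f _).2, Subtype.coe_eta,
      Homeomorph.symm_apply_apply]
  · rw [glueMap_of_mem_right hfg hx, glueMap_of_mem_right hfg_symm (g _).2, Subtype.coe_eta,
      Homeomorph.symm_apply_apply]

noncomputable def Homeomorph.glue (hP : IsClosed P) (hQ : IsClosed Q) (hPQ : P ∪ Q = univ)
    (hA : IsClosed A) (hB : IsClosed B) (hAB : A ∪ B = univ) (f : P ≃ₜ A) (g : Q ≃ₜ B)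
    (hfg : ∀ x (hxP : x ∈ P) (hxQ : x ∈ Q), (f ⟨x, hxP⟩ : Y) = g ⟨x, hxQ⟩)
    (hf : ∀ x : P, (f x : Y) ∈ B → (x : X) ∈ Q) : X ≃ₜ Y :=
  have hfg_symm : ∀ y (hyA : y ∈ A) (hyB : y ∈ B), (f.symm ⟨y, hyA⟩ : X) = g.symm ⟨y, hyB⟩ := by
    intro y hyA hyB
    set x := f.symm ⟨y, hyA⟩
    have hxQ : (x : X) ∈ Q := hf x (by simpa [x] using hyB)
    have hgx : g ⟨x, hxQ⟩ = ⟨y, hyB⟩ := Subtype.ext (by simp [x, ← hfg])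
    rw [← hgx, Homeomorph.symm_apply_apply]
  { toFun := glueMap hPQ (fun x => (f x : Y)) (fun x => g x)
    invFun := glueMap hAB (fun y => (f.symm y : X)) (fun y => g.symm y)
    left_inv := glueMap_leftInverse hAB f g hfg hfg_symm
    right_inv := glueMap_leftInverse hPQ f.symm g.symm hfg_symm hfg
    continuous_toFun := continuous_glueMap hP hQ hfg (by fun_prop) (by fun_prop)
    continuous_invFun := continuous_glueMap hA hB hfg_symm (by fun_prop) (by fun_prop) }

end Glue

theorem Topology.IsEmbedding.exists_homeomorph_comp_eq {X Y Z : Type*} [TopologicalSpace X]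
    [TopologicalSpace Y] [TopologicalSpace Z] {f : X → Z} {g : Y → Z} (hf : IsEmbedding f)
    (hg : IsEmbedding g) (hfg : range g = range f) : ∃ φ : Y ≃ₜ X, ∀ y, f (φ y) = g y :=
  ⟨hg.toHomeomorph.trans ((Homeomorph.setCongr hfg).trans hf.toHomeomorph.symm), fun y =>
    congrArg Subtype.val (hf.toHomeomorph.apply_symm_apply ⟨g y, hfg ▸ mem_range_self y⟩)⟩

section HalfSpace

variable (E : Type*) [TopologicalSpace E]

def Homeomorph.prodIciUpperHalfSpace : E × Ici (0 : ℝ) ≃ₜ {p : E × ℝ | 0 ≤ p.2} where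
  toFun p := ⟨(p.1, p.2), p.2.2⟩
  invFun q := (q.1.1, ⟨q.1.2, q.2⟩)
  left_inv _ := rfl
  right_inv _ := rfl

def Homeomorph.prodIciLowerHalfSpace : E × Ici (0 : ℝ) ≃ₜ {p : E × ℝ | p.2 ≤ 0} where
  toFun p := ⟨(p.1, -p.2), (neg_nonpos.2 p.2.2 : -(p.2 : ℝ) ≤ 0)⟩
  invFun q := (q.1.1, ⟨-q.1.2, mem_Ici.2 (neg_nonneg.2 q.2)⟩)
  left_inv _ := by simp
  right_inv _ := by simp

variable {E} {M : Type*} [TopologicalSpace M] {P Q : Set M} (h : P ≃ₜ E × Ici (0 : ℝ))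

def boundaryParam (a : E) : M := h.symm (a, ⟨0, self_mem_Ici⟩)

theorem isEmbedding_boundaryParam : IsEmbedding (boundaryParam h) :=
  IsEmbedding.subtypeVal.comp (h.symm.isEmbedding.comp (isEmbedding_prodMkLeft _))

theorem boundaryParam_fst {x : P} (hx : ((h x).2 : ℝ) = 0) : boundaryParam h (h x).1 = x := by
  have : h x = ((h x).1, ⟨0, self_mem_Ici⟩) := Prod.ext rfl (Subtype.ext hx)
  rw [boundaryParam, ← this, Homeomorph.symm_apply_apply]

variable {h} (hb : h '' {x : P | (x : M) ∈ Q} = {y | (y.2 : ℝ) = 0})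
include hb

theorem snd_eq_zero_iff_mem (x : P) : ((h x).2 : ℝ) = 0 ↔ (x : M) ∈ Q := by
  change h x ∈ {y : E × Ici (0 : ℝ) | (y.2 : ℝ) = 0} ↔ x ∈ {x : P | (x : M) ∈ Q}
  rw [← hb, h.injective.mem_set_image]

theorem range_boundaryParam : range (boundaryParam h) = P ∩ Q := by
  ext x
  constructor
  · rintro ⟨a, rfl⟩
    exact ⟨(h.symm _).2, (snd_eq_zero_iff_mem hb _).1 (by simp)⟩
  · rintro ⟨hxP, hxQ⟩
    exact ⟨_, boundaryParam_fst h ((snd_eq_zero_iff_mem hb ⟨x, hxP⟩).2 hxQ)⟩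

end HalfSpace

theorem nonempty_homeomorph_euclideanSpace_prod_real (n : ℕ) :
    Nonempty (EuclideanSpace ℝ (Fin n) × ℝ ≃ₜ EuclideanSpace ℝ (Fin (n + 1))) := by
  have hfinrank : Module.finrank ℝ (EuclideanSpace ℝ (Fin n) × ℝ) =
      Module.finrank ℝ (EuclideanSpace ℝ (Fin (n + 1))) := by
    simp only [Module.finrank_prod, finrank_euclideanSpace_fin, Module.finrank_self]
  exact ⟨(ContinuousLinearEquiv.ofFinrankEq hfinrank).toHomeomorph⟩

theorem glue_halfspaces_general (n : ℕ) (hn : 1 ≤ n)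
    (M : Type) [TopologicalSpace M]
    (P Q : Set M) (hP : IsClosed P) (hQ : IsClosed Q) (hPQ : P ∪ Q = Set.univ)
    (h₁ : ↥P ≃ₜ EuclideanSpace ℝ (Fin (n - 1)) × Set.Ici (0 : ℝ))
    (h₂ : ↥Q ≃ₜ EuclideanSpace ℝ (Fin (n - 1)) × Set.Ici (0 : ℝ))
    (hb₁ : h₁ '' {x : P | (x : M) ∈ Q} = {y | (y.2 : ℝ) = 0})
    (hb₂ : h₂ '' {x : Q | (x : M) ∈ P} = {y | (y.2 : ℝ) = 0}) :
    Nonempty (M ≃ₜ EuclideanSpace ℝ (Fin n)) := by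
  obtain ⟨φ, hφ⟩ := (isEmbedding_boundaryParam h₁).exists_homeomorph_comp_eq
    (isEmbedding_boundaryParam h₂)
    (by rw [range_boundaryParam hb₁, range_boundaryParam hb₂, inter_comm])
  have hφ_fst : ∀ x (hxP : x ∈ P) (hxQ : x ∈ Q), φ (h₂ ⟨x, hxQ⟩).1 = (h₁ ⟨x, hxP⟩).1 := by
    intro x hxP hxQ
    apply (isEmbedding_boundaryParam h₁).injective
    rw [hφ, boundaryParam_fst h₂ ((snd_eq_zero_iff_mem hb₂ _).2 hxP),
      boundaryParam_fst h₁ ((snd_eq_zero_iff_mem hb₁ _).2 hxQ)]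
  have glued : M ≃ₜ EuclideanSpace ℝ (Fin (n - 1)) × ℝ :=
    Homeomorph.glue hP hQ hPQ (isClosed_le continuous_snd continuous_const)
      (isClosed_le continuous_const continuous_snd)
      (by ext p; simp [le_total]) (h₁.trans (Homeomorph.prodIciLowerHalfSpace _))
      (h₂.trans ((φ.prodCongr (.refl _)).trans (Homeomorph.prodIciUpperHalfSpace _)))
      (fun x hxP hxQ => by
        simp [Homeomorph.prodIciLowerHalfSpace, Homeomorph.prodIciUpperHalfSpace, hφ_fst x hxP hxQ,
          (snd_eq_zero_iff_mem hb₁ ⟨x, hxP⟩).2 hxQ, (snd_eq_zero_iff_mem hb₂ ⟨x, hxQ⟩).2 hxP])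
      (fun x (hx : 0 ≤ -((h₁ x).2 : ℝ)) => (snd_eq_zero_iff_mem hb₁ x).1
        (le_antisymm (neg_nonneg.1 hx) (h₁ x).2.2))
  obtain ⟨e⟩ := nonempty_homeomorph_euclideanSpace_prod_real (n - 1)
  rw [Nat.sub_add_cancel hn] at e
  exact ⟨glued.trans e⟩

/-- **Gluing two closed half-spaces along their boundaries gives Euclidean space.**
Let `n ≥ 1` and let `M` be a Hausdorff space with closed subsets `P` and `Q` such that
`M = P ∪ Q`. Suppose there are homeomorphisms `h₁ : P ≃ₜ ℝⁿ⁻¹ × [0,∞)` and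
`h₂ : Q ≃ₜ ℝⁿ⁻¹ × [0,∞)` with `h₁(P ∩ Q) = ℝⁿ⁻¹ × {0}` and `h₂(P ∩ Q) = ℝⁿ⁻¹ × {0}`.
Then `M` is homeomorphic to `ℝⁿ`. -/
theorem glue_halfspaces (n : ℕ) (hn : 1 ≤ n)
    (M : Type) [TopologicalSpace M] [T2Space M]
    (P Q : Set M) (hP : IsClosed P) (hQ : IsClosed Q) (hPQ : P ∪ Q = Set.univ)
    (h₁ : ↥P ≃ₜ EuclideanSpace ℝ (Fin (n - 1)) × Set.Ici (0 : ℝ))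
    (h₂ : ↥Q ≃ₜ EuclideanSpace ℝ (Fin (n - 1)) × Set.Ici (0 : ℝ))
    (hb₁ : h₁ '' {x : P | (x : M) ∈ Q} = {y | (y.2 : ℝ) = 0})
    (hb₂ : h₂ '' {x : Q | (x : M) ∈ P} = {y | (y.2 : ℝ) = 0}) :
    Nonempty (M ≃ₜ EuclideanSpace ℝ (Fin n)) :=
  glue_halfspaces_general n hn M P Q hP hQ hPQ h₁ h₂ hb₁ hb₂
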